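/- arXiv:2312.11995 — 2 statements merged into one kernel-verified Lean document; each statement's English description precedes it below -/
import Mathlib

section
/- Let q be a prime power and let x, y, z be three pairwise distinct (q+1)-th roots of unity in F_{q^2}. If the determinant of the matrix with rows (x^{-h}, y^{-h}, z^{-h}), (x^h, y^h, z^h), (x^{h+1}, y^{h+1}, z^{h+1}) is zero, then either x^{2h+1} = y^{2h+1} = z^{2h+1} or x^{2h} = y^{2h} = z^{2h}. -/
/-!
Write `X = x^(2h)`, `Y = y^(2h)`, `Z = z^(2h)`. Scaling the columns of the matrix by `x^h, y^h, z^h`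
turns the vanishing determinant into `YZ(z - y) + XZ(x - z) + XY(y - x) = 0`. Since `x^q = x⁻¹`
on `U_{q+1}`, the `q`-Frobenius inverts every quantity, and clearing denominators in the image of
this relation gives a second one, `Xx(y - z) + Yy(z - x) + Zz(x - y) = 0`. A linear combination of
the two is `(z - y)(x - z)(X - Y)(Xx - Yy)`, so `(X - Y)(Xx - Yy) = 0`,
and likewise for the other two pairs. So each pair of points agrees in its `2h`-th or in its
`(2h+1)`-th power; two of the three pairs agree in the same power,
and as they share a point, transitivity gives the third.
-/

section
variable {F : Type*} [Field F]

lemma pow_eq_inv_of_pow_succ_eq_one {x : F} {q : ℕ} (hx : x ^ (q + 1) = 1) : x ^ q = x⁻¹ :=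
  eq_inv_of_mul_eq_one_left (by rwa [← pow_succ])

lemma prod_pow_mul_det {x y z : F} (hx : x ≠ 0) (hy : y ≠ 0) (hz : z ≠ 0) (h : ℕ) :
    (x * y * z) ^ h * Matrix.det !![x⁻¹ ^ h, y⁻¹ ^ h, z⁻¹ ^ h;
                                    x ^ h, y ^ h, z ^ h;
                                    x ^ (h + 1), y ^ (h + 1), z ^ (h + 1)] =
      y ^ (2 * h) * z ^ (2 * h) * (z - y) + x ^ (2 * h) * z ^ (2 * h) * (x - z) +
        x ^ (2 * h) * y ^ (2 * h) * (y - x) := by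
  rw [Matrix.det_fin_three]
  simp only [inv_pow, Fin.isValue, Matrix.of_apply, Matrix.cons_val', Matrix.cons_val_zero,
    Matrix.cons_val_fin_one, Matrix.cons_val_one, Matrix.cons_val]
  field_simp
  ring

lemma sum_pow_succ_eq_zero_of_map_eq_inv (σ : F →+* F) {x y z : F} (hx : x ≠ 0) (hy : y ≠ 0)
    (hz : z ≠ 0) (hσx : σ x = x⁻¹) (hσy : σ y = y⁻¹) (hσz : σ z = z⁻¹) {k : ℕ}
    (h : y ^ k * z ^ k * (z - y) + x ^ k * z ^ k * (x - z) + x ^ k * y ^ k * (y - x) = 0) :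
    x ^ (k + 1) * (y - z) + y ^ (k + 1) * (z - x) + z ^ (k + 1) * (x - y) = 0 :=
  calc _ = (x * y * z) ^ (k + 1) *
        σ (y ^ k * z ^ k * (z - y) + x ^ k * z ^ k * (x - z) + x ^ k * y ^ k * (y - x)) := by
        simp only [map_add, map_mul, map_sub, map_pow, hσx, hσy, hσz, inv_pow]
        field_simp
        ring
    _ = 0 := by rw [h, map_zero, mul_zero]

lemma pow_eq_or_pow_succ_eq_of_sum_eq_zero {x y z : F} (hxz : x ≠ z) (hyz : y ≠ z) {k : ℕ}
    (h₀ : y ^ k * z ^ k * (z - y) + x ^ k * z ^ k * (x - z) + x ^ k * y ^ k * (y - x) = 0)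
    (h₁ : x ^ (k + 1) * (y - z) + y ^ (k + 1) * (z - x) + z ^ (k + 1) * (x - y) = 0) :
    x ^ k = y ^ k ∨ x ^ (k + 1) = y ^ (k + 1) := by
  have key : (z - y) * (x - z) * ((x ^ k - y ^ k) * (x ^ (k + 1) - y ^ (k + 1))) = 0 := by
    linear_combination (-((z - y) * y ^ k + (x - z) * x ^ k)) * h₁ - ((y - x) * z) * h₀
  simpa [sub_eq_zero, hxz, hyz.symm] using key

end

lemma eq_and_eq_or_eq_and_eq {α : Type*} {a b c a' b' c' : α} (hab : a = b ∨ a' = b')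
    (hbc : b = c ∨ b' = c') (hca : c = a ∨ c' = a') : a = b ∧ b = c ∨ a' = b' ∧ b' = c' := by
  grind

theorem stmt_2 (q : ℕ) (hq : ∃ p n : ℕ, p.Prime ∧ 0 < n ∧ q = p ^ n)
    (F : Type*) [Field F] [Fintype F] (hF : Fintype.card F = q ^ 2)
    (h : ℕ) (x y z : F)
    (hx : x ^ (q + 1) = 1) (hy : y ^ (q + 1) = 1) (hz : z ^ (q + 1) = 1)
    (hxy : x ≠ y) (hxz : x ≠ z) (hyz : y ≠ z)
    (hdet : Matrix.det !![x⁻¹ ^ h, y⁻¹ ^ h, z⁻¹ ^ h;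
                          x ^ h, y ^ h, z ^ h;
                          x ^ (h + 1), y ^ (h + 1), z ^ (h + 1)] = 0) :
    (x ^ (2 * h + 1) = y ^ (2 * h + 1) ∧ y ^ (2 * h + 1) = z ^ (2 * h + 1)) ∨
      (x ^ (2 * h) = y ^ (2 * h) ∧ y ^ (2 * h) = z ^ (2 * h)) := by
  obtain ⟨p, n, hp, -, rfl⟩ := hq
  have : Fact p.Prime := ⟨hp⟩
  have : CharP F p := charP_of_card_eq_prime_pow (f := n * 2) (by rw [hF, pow_mul])
  have ne_zero {t : F} (ht : t ^ (p ^ n + 1) = 1) : t ≠ 0 := by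
    rintro rfl
    simp at ht
  have frob {t : F} (ht : t ^ (p ^ n + 1) = 1) : iterateFrobenius F p n t = t⁻¹ :=
    (iterateFrobenius_def ..).trans (pow_eq_inv_of_pow_succ_eq_one ht)
  have h₀ := prod_pow_mul_det (ne_zero hx) (ne_zero hy) (ne_zero hz) h
  rw [hdet, mul_zero] at h₀
  have h₁ := sum_pow_succ_eq_zero_of_map_eq_inv _ (ne_zero hx) (ne_zero hy) (ne_zero hz)
    (frob hx) (frob hy) (frob hz) h₀.symm
  refine (eq_and_eq_or_eq_and_eq ?_ ?_ ?_).symm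
  · exact pow_eq_or_pow_succ_eq_of_sum_eq_zero hxz hyz h₀.symm h₁
  · exact pow_eq_or_pow_succ_eq_of_sum_eq_zero hxy.symm hxz.symm
      (by linear_combination h₀.symm) (by linear_combination h₁)
  · exact pow_eq_or_pow_succ_eq_of_sum_eq_zero hyz.symm hxy
      (by linear_combination h₀.symm) (by linear_combination h₁)
end

section
/- Let q be a prime power and let x, y, z be three pairwise distinct (q+1)-th roots of unity in F_{q^2}. If the determinant of the matrix with rows (x^{-(h+1)}, y^{-(h+1)}, z^{-(h+1)}), (x^h, y^h, z^h), (x^{h+1}, y^{h+1}, z^{h+1}) is zero, then either x^{2h+1} = y^{2h+1} = z^{2h+1} or x^{2h+2} = y^{2h+2} = z^{2h+2}. -/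
/-!
A vanishing determinant gives a nonzero `(a, b, c)` with `a + b u^(2h+1) + c u^(2h+2) = 0` for
`u = x, y, z`. The ring endomorphism `σ s = s^q` inverts every `u` with `u^(q+1) = 1`, so applying
it and clearing denominators gives `σa u^(2h+2) + σb u + σc = 0`. Eliminating `u^(2h+2)` between
the two relations leaves a quadratic in `u` with constant term `b σc`; having three distinct roots
it vanishes, so `b = 0` or `c = 0`, and the surviving two-term relation forces `u^(2h+2)`
resp. `u^(2h+1)` to be constant.
-/

section UnitCircle

variable {R : Type*} [CommRing R] {σ : R →+* R} {a b c u : R}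

theorem map_relation_of_map_mul_self_eq_one (hu : σ u * u = 1) {m : ℕ}
    (h : a + b * u ^ m + c * u ^ (m + 1) = 0) : σ a * u ^ (m + 1) + σ b * u + σ c = 0 :=
  calc σ a * u ^ (m + 1) + σ b * u + σ c
      = σ a * u ^ (m + 1) + σ b * (σ u * u) ^ m * u + σ c * (σ u * u) ^ (m + 1) := by
        rw [hu]; ring
    _ = u ^ (m + 1) * σ (a + b * u ^ m + c * u ^ (m + 1)) := by
        simp only [map_add, map_mul, map_pow]; ring
    _ = 0 := by rw [h, map_zero, mul_zero]

theorem quadratic_relation_of_map_mul_self_eq_one (hu : σ u * u = 1) {m : ℕ}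
    (h : a + b * u ^ m + c * u ^ (m + 1) = 0) :
    c * σ b * u ^ 2 + (b * σ b + c * σ c - a * σ a) * u + b * σ c = 0 := by
  linear_combination (b + c * u) * map_relation_of_map_mul_self_eq_one hu h - σ a * u * h

end UnitCircle

theorem coeffs_eq_zero_of_three_roots {R : Type*} [CommRing R] [IsDomain R] {A B C x y z : R}
    (hxy : x ≠ y) (hxz : x ≠ z) (hyz : y ≠ z) (hx : A * x ^ 2 + B * x + C = 0)
    (hy : A * y ^ 2 + B * y + C = 0) (hz : A * z ^ 2 + B * z + C = 0) :
    A = 0 ∧ B = 0 ∧ C = 0 := by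
  have hxy' : A * (x + y) + B = 0 := by
    refine (mul_eq_zero.mp ?_).resolve_left (sub_ne_zero.mpr hxy)
    linear_combination hx - hy
  have hxz' : A * (x + z) + B = 0 := by
    refine (mul_eq_zero.mp ?_).resolve_left (sub_ne_zero.mpr hxz)
    linear_combination hx - hz
  have hA : A = 0 :=
    (mul_eq_zero.mp (by linear_combination hxy' - hxz' : A * (y - z) = 0)).resolve_right
      (sub_ne_zero.mpr hyz)
  have hB : B = 0 := by linear_combination hxy' - (x + y) * hA
  exact ⟨hA, hB, by linear_combination hx - x ^ 2 * hA - x * hB⟩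

theorem eq_of_linear_relations {R : Type*} [CommRing R] [IsDomain R] {a b s t r : R}
    (hab : a ≠ 0 ∨ b ≠ 0) (hs : a + b * s = 0) (ht : a + b * t = 0) (hr : a + b * r = 0) :
    s = t ∧ t = r := by
  have hb : b ≠ 0 := by
    rintro rfl
    exact hab.elim (fun ha => ha (by simpa using hs)) (· rfl)
  exact ⟨mul_left_cancel₀ hb (by linear_combination hs - ht),
    mul_left_cancel₀ hb (by linear_combination ht - hr)⟩

theorem add_mul_pow_add_mul_pow_eq_zero_of_inv {F : Type*} [Field F] {a b c u : F} (hu : u ≠ 0)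
    (k : ℕ) (hrel : a * u⁻¹ ^ (k + 1) + b * u ^ k + c * u ^ (k + 1) = 0) :
    a + b * u ^ (2 * k + 1) + c * u ^ (2 * k + 2) = 0 := by
  have hinv : u⁻¹ ^ (k + 1) * u ^ (k + 1) = 1 := by rw [← mul_pow, inv_mul_cancel₀ hu, one_pow]
  linear_combination u ^ (k + 1) * hrel - a * hinv

theorem stmt_3 (q : ℕ) (hq : ∃ p n : ℕ, p.Prime ∧ 0 < n ∧ q = p ^ n)
    (F : Type*) [Field F] [Fintype F] (hF : Fintype.card F = q ^ 2)
    (h : ℕ) (x y z : F)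
    (hx : x ^ (q + 1) = 1) (hy : y ^ (q + 1) = 1) (hz : z ^ (q + 1) = 1)
    (hxy : x ≠ y) (hxz : x ≠ z) (hyz : y ≠ z)
    (hdet : Matrix.det !![x⁻¹ ^ (h + 1), y⁻¹ ^ (h + 1), z⁻¹ ^ (h + 1);
                          x ^ h, y ^ h, z ^ h;
                          x ^ (h + 1), y ^ (h + 1), z ^ (h + 1)] = 0) :
    (x ^ (2 * h + 1) = y ^ (2 * h + 1) ∧ y ^ (2 * h + 1) = z ^ (2 * h + 1)) ∨
      (x ^ (2 * h + 2) = y ^ (2 * h + 2) ∧ y ^ (2 * h + 2) = z ^ (2 * h + 2)) := by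
  obtain ⟨p, n, hp, -, rfl⟩ := hq
  have : Fact p.Prime := ⟨hp⟩
  have : CharP F p := charP_of_card_eq_prime_pow (f := n * 2) (by rw [hF, pow_mul])
  set σ := iterateFrobenius F p n
  have hσ : ∀ u : F, u ^ (p ^ n + 1) = 1 → σ u * u = 1 := fun u hu => by
    rwa [iterateFrobenius_def, ← pow_succ]
  obtain ⟨v, hv, hv0⟩ := Matrix.exists_vecMul_eq_zero_iff.mpr hdet
  have hE : ∀ u, u ^ (p ^ n + 1) = 1 →
      v 0 * u⁻¹ ^ (h + 1) + v 1 * u ^ h + v 2 * u ^ (h + 1) = 0 →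
      v 0 + v 1 * u ^ (2 * h + 1) + v 2 * u ^ (2 * h + 2) = 0 := fun u hu =>
    add_mul_pow_add_mul_pow_eq_zero_of_inv (right_ne_zero_of_mul_eq_one (hσ u hu)) h
  have hcol := congrFun hv0
  simp only [Matrix.vecMul, dotProduct, Fin.sum_univ_three] at hcol
  have Ex := hE x hx (by simpa using hcol 0)
  have Ey := hE y hy (by simpa using hcol 1)
  have Ez := hE z hz (by simpa using hcol 2)
  obtain ⟨-, -, hbc⟩ := coeffs_eq_zero_of_three_roots hxy hxz hyz
    (quadratic_relation_of_map_mul_self_eq_one (hσ x hx) Ex)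
    (quadratic_relation_of_map_mul_self_eq_one (hσ y hy) Ey)
    (quadratic_relation_of_map_mul_self_eq_one (hσ z hz) Ez)
  rcases mul_eq_zero.mp hbc with hb | hc
  · have hac : v 0 ≠ 0 ∨ v 2 ≠ 0 := by
      by_contra! h0
      exact hv (funext fun j => by fin_cases j <;> simp [hb, h0])
    right
    exact eq_of_linear_relations hac (by simpa [hb] using Ex) (by simpa [hb] using Ey)
      (by simpa [hb] using Ez)
  · replace hc : v 2 = 0 := (map_eq_zero σ).mp hc
    have hab : v 0 ≠ 0 ∨ v 1 ≠ 0 := by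
      by_contra! h0
      exact hv (funext fun j => by fin_cases j <;> simp [hc, h0])
    left
    exact eq_of_linear_relations hab (by simpa [hc] using Ex) (by simpa [hc] using Ey)
      (by simpa [hc] using Ez)
end
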